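/- Let (B, L) be a Banach SNL space with Banach SNL dual (B*, L̃), suppose L(B) = B*, and let A be a norm-closed linear L-positive subspace of B. Then A is maximally L-positive if and only if A⁰ is L̃-negative, and this also holds if and only if A⁰ is maximally L̃-negative. -/

import Mathlib

/-!
Let `C = {b | L b ∈ A⁰}` be the `L`-orthogonal of `A`, so that `A⁰ = L(C)` and `q_L̃ ∘ L = q_L`.
If `A` is maximally `L`-positive and `e ∈ C` had `q_L(e) > 0`, then `A ∪ {e}` would still be
`L`-positive; hence `q_L ≤ 0` on `C`, i.e. `A⁰` is `L̃`-negative.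

Conversely, suppose `q_L ≤ 0` on `C` and `q_L(c - a) ≥ 0` for all `a ∈ A`; we show `c ∈ A`.
Given `δ > 0`, Ekeland's principle applied on `A` to `a ↦ 2 q_L(c - a) + ‖c - a‖²` yields `b ∈ A`
whose first-order condition says that, with `d = c - b`, the functional `-2 L d` is dominated
on `A` by the sublinear function `(‖·‖²)'(d; ·) + δ‖·‖`. By Hahn–Banach it extends to some `L e`
dominated by the same function; then `e + 2d ∈ C`, and `q_L(e + 2d) ≤ 0` forces `‖d‖ ≤ 3δ`.
So `c ∈ closure A = A`. This gives maximality of `A`, and, applied to `-L` with `A` and `C`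
exchanged (`C^⊥ = A` by Hahn–Banach and `L(B) = B*`), maximality of `A⁰`.
-/

open Filter Topology NormedSpace

noncomputable def qL {B : Type*} [NormedAddCommGroup B] [NormedSpace ℝ B]
    (L : B →L[ℝ] StrongDual ℝ B) (b : B) : ℝ := (1 / 2) * L b b

def LPositive {B : Type*} [NormedAddCommGroup B] [NormedSpace ℝ B]
    (L : B →L[ℝ] StrongDual ℝ B) (A : Set B) : Prop :=
  A.Nonempty ∧ ∀ b ∈ A, ∀ c ∈ A, 0 ≤ qL L (b - c)

def MaxLPositive {B : Type*} [NormedAddCommGroup B] [NormedSpace ℝ B]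
    (L : B →L[ℝ] StrongDual ℝ B) (A : Set B) : Prop :=
  LPositive L A ∧ ∀ A' : Set B, LPositive L A' → A ⊆ A' → A' = A

def LNegative {B : Type*} [NormedAddCommGroup B] [NormedSpace ℝ B]
    (L : B →L[ℝ] StrongDual ℝ B) (A : Set B) : Prop :=
  A.Nonempty ∧ ∀ b ∈ A, ∀ c ∈ A, qL L (b - c) ≤ 0

def MaxLNegative {B : Type*} [NormedAddCommGroup B] [NormedSpace ℝ B]
    (L : B →L[ℝ] StrongDual ℝ B) (A : Set B) : Prop :=
  LNegative L A ∧ ∀ A' : Set B, LNegative L A' → A ⊆ A' → A' = A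

lemma le_of_eventually_le_add_mul {a b c : ℝ} (h : ∀ᶠ t in 𝓝[>] (0 : ℝ), a ≤ b + t * c) :
    a ≤ b := by
  have hlim : Tendsto (fun t : ℝ => b + t * c) (𝓝[>] 0) (𝓝 b) := by
    have : Continuous fun t : ℝ => b + t * c := by fun_prop
    simpa using (this.tendsto 0).mono_left nhdsWithin_le_nhds
  exact ge_of_tendsto hlim h

lemma exists_mem_forall_le_add {α : Type*} {G : α → ℝ} {S : Set α} (hS : S.Nonempty)
    (hG : BddBelow (G '' S)) {ε : ℝ} (hε : 0 < ε) : ∃ y ∈ S, ∀ w ∈ S, G y ≤ G w + ε := by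
  obtain ⟨_, ⟨y, hy, rfl⟩, hlt⟩ :=
    exists_lt_of_csInf_lt (hS.image G) (lt_add_of_pos_right (sInf (G '' S)) hε)
  exact ⟨y, hy, fun w hw => hlt.le.trans (by gcongr; exact csInf_le hG ⟨w, hw, rfl⟩)⟩

section Ekeland

variable {X : Type*} [PseudoMetricSpace X] {G : X → ℝ} {δ : ℝ}

lemma add_mul_dist_le_trans (hδ : 0 ≤ δ) {x y z : X} (hxy : G x + δ * dist x y ≤ G y)
    (hyz : G y + δ * dist y z ≤ G z) : G x + δ * dist x z ≤ G z := by
  nlinarith [dist_triangle x y z]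

/-- **Ekeland's variational principle**. -/
theorem exists_forall_le_add_mul_dist [CompleteSpace X] [Nonempty X] (hG : Continuous G)
    (hbdd : BddBelow (Set.range G)) (hδ : 0 < δ) : ∃ b, ∀ x, G b ≤ G x + δ * dist x b := by
  -- `S z` is the set of points below `z` in the Brøndsted order. Each `b (n + 1)` minimizes
  -- `G` on `S (b n)` up to `2⁻¹ ^ n`, so the nested closed sets `S (b n)` shrink to a point.
  set S : X → Set X := fun z => {w | G w + δ * dist w z ≤ G z}
  have hS_closed : ∀ z, IsClosed (S z) := fun z =>
    isClosed_le (hG.add (continuous_const.mul (continuous_id.dist continuous_const)))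
      continuous_const
  have hS_self : ∀ z, z ∈ S z := fun z => by simp [S]
  have hS_mono : ∀ {y z}, y ∈ S z → S y ⊆ S z := fun hy _ hw =>
    add_mul_dist_le_trans hδ.le hw hy
  have hstep : ∀ (n : ℕ) (z : X), ∃ y ∈ S z, ∀ w ∈ S z, G y ≤ G w + 2⁻¹ ^ n := fun n z =>
    exists_mem_forall_le_add ⟨z, hS_self z⟩ (hbdd.mono (Set.image_subset_range G _))
      (by positivity)
  choose next hnext_mem hnext_le using hstep
  let b : ℕ → X := fun n => Nat.rec (Classical.arbitrary X) next n
  have hb_mem : ∀ n, b (n + 1) ∈ S (b n) := fun n => hnext_mem n (b n)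
  have hb_anti : ∀ n m, n ≤ m → S (b m) ⊆ S (b n) := fun n m hnm =>
    Nat.le_induction subset_rfl (fun m _ ih => (hS_mono (hb_mem m)).trans ih) m hnm
  have hS_small : ∀ n, ∀ w ∈ S (b (n + 1)), δ * dist w (b (n + 1)) ≤ 2⁻¹ ^ n := fun n w hw => by
    have := hnext_le n (b n) w (hS_mono (hb_mem n) hw)
    simp only [S, Set.mem_ofPred_eq] at hw
    linarith
  have hcauchy : CauchySeq b := by
    refine Metric.cauchySeq_iff'.2 fun ε hε => ?_
    obtain ⟨n, hn⟩ := exists_pow_lt_of_lt_one (mul_pos hδ hε) (by norm_num : (2⁻¹ : ℝ) < 1)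
    refine ⟨n + 1, fun m hm => ?_⟩
    have := hS_small n (b m) (hb_anti _ _ hm (hS_self _))
    exact lt_of_mul_lt_mul_left (this.trans_lt hn) hδ.le
  obtain ⟨β, hβ⟩ := cauchySeq_tendsto_of_complete hcauchy
  have hβ_mem : ∀ n, β ∈ S (b n) := fun n =>
    (hS_closed _).mem_of_tendsto hβ
      (eventually_atTop.2 ⟨n, fun m hm => hb_anti n m hm (hS_self _)⟩)
  refine ⟨β, fun x => le_of_not_gt fun hx => ?_⟩
  have hxS : ∀ n, x ∈ S (b n) := fun n => hS_mono (hβ_mem n) hx.le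
  have hβx : G β ≤ G x := le_of_forall_pos_lt_add fun ε hε => by
    obtain ⟨n, hn⟩ := exists_pow_lt_of_lt_one hε (by norm_num : (2⁻¹ : ℝ) < 1)
    have h1 := hnext_le n (b n) x (hxS n)
    have h2 := hβ_mem (n + 1)
    simp only [S, Set.mem_ofPred_eq] at h2
    nlinarith [dist_nonneg (x := β) (y := b (n + 1))]
  nlinarith [dist_nonneg (x := x) (y := β)]

end Ekeland

section NormSqDirDeriv

variable {E : Type*} [SeminormedAddCommGroup E] [NormedSpace ℝ E]

noncomputable def normSqSlope (d x : E) (t : ℝ) : ℝ := (‖d + t • x‖ ^ 2 - ‖d‖ ^ 2) / t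

/-- The right derivative at `0` of `t ↦ ‖d + t • x‖ ^ 2`: the difference quotients
`normSqSlope d x` increase with `t` (convexity), so their infimum is their limit as `t → 0⁺`. -/
noncomputable def normSqDirDeriv (d x : E) : ℝ := ⨅ t : Set.Ioi (0 : ℝ), normSqSlope d x t

lemma convexOn_univ_norm_sq : ConvexOn ℝ Set.univ (fun x : E => ‖x‖ ^ 2) :=
  convexOn_univ_norm.pow (fun _ _ => norm_nonneg _) 2

variable {d x y : E} {k s t : ℝ}

lemma normSqSlope_mono (ht : 0 < t) (hts : t ≤ s) :
    normSqSlope d x t ≤ normSqSlope d x s := by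
  have hs : 0 < s := ht.trans_le hts
  have hconv := convexOn_univ_norm_sq.2 (Set.mem_univ d) (Set.mem_univ (d + s • x))
    (sub_nonneg.2 ((div_le_one hs).2 hts)) (div_pos ht hs).le (sub_add_cancel 1 (t / s))
  have hcomb : (1 - t / s) • d + (t / s) • (d + s • x) = d + t • x := by
    rw [smul_add, smul_smul, div_mul_cancel₀ t hs.ne']; module
  simp only [smul_eq_mul, hcomb] at hconv
  unfold normSqSlope
  rw [div_le_div_iff₀ ht hs]
  have key : s * ‖d + t • x‖ ^ 2 ≤ (s - t) * ‖d‖ ^ 2 + t * ‖d + s • x‖ ^ 2 := by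
    have := mul_le_mul_of_nonneg_left hconv hs.le
    field_simp at this
    linarith
  nlinarith

lemma neg_le_normSqSlope (ht : 0 < t) : -(2 * ‖d‖ * ‖x‖) ≤ normSqSlope d x t := by
  have hlow : ‖d‖ - t * ‖x‖ ≤ ‖d + t • x‖ := by
    have := norm_sub_norm_le d (-(t • x))
    rw [sub_neg_eq_add, norm_neg, norm_smul, Real.norm_of_nonneg ht.le] at this
    linarith
  rw [normSqSlope, le_div_iff₀ ht]
  rcases le_total (t * ‖x‖) ‖d‖ with h | h
  · have hsq := pow_le_pow_left₀ (sub_nonneg.2 h) hlow 2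
    nlinarith [sq_nonneg (t * ‖x‖)]
  · nlinarith [norm_nonneg d, norm_nonneg (d + t • x)]

lemma normSqSlope_le (ht : 0 < t) : normSqSlope d x t ≤ 2 * ‖d‖ * ‖x‖ + t * ‖x‖ ^ 2 := by
  have hup : ‖d + t • x‖ ≤ ‖d‖ + t * ‖x‖ := by
    simpa [norm_smul, Real.norm_of_nonneg ht.le] using norm_add_le d (t • x)
  rw [normSqSlope, div_le_iff₀ ht]
  nlinarith [pow_le_pow_left₀ (norm_nonneg _) hup 2]

lemma normSqSlope_smul (hk : 0 < k) (ht : 0 < t) :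
    normSqSlope d (k • x) t = k * normSqSlope d x (k * t) := by
  simp only [normSqSlope, smul_smul, mul_comm t k]
  field_simp

lemma normSqSlope_add (ht : 0 < t) :
    normSqSlope d (x + y) t ≤ normSqSlope d x (2 * t) + normSqSlope d y (2 * t) := by
  have hconv := convexOn_univ_norm_sq.2 (Set.mem_univ (d + (2 * t) • x))
    (Set.mem_univ (d + (2 * t) • y)) (by norm_num : (0 : ℝ) ≤ 1 / 2)
    (by norm_num : (0 : ℝ) ≤ 1 / 2) (by norm_num)
  have hcomb : (1 / 2 : ℝ) • (d + (2 * t) • x) + (1 / 2 : ℝ) • (d + (2 * t) • y)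
      = d + t • (x + y) := by module
  simp only [smul_eq_mul, hcomb] at hconv
  unfold normSqSlope
  rw [← add_div, div_le_div_iff₀ ht (by positivity)]
  nlinarith

lemma bddBelow_range_normSqSlope :
    BddBelow (Set.range fun t : Set.Ioi (0 : ℝ) => normSqSlope d x t) :=
  ⟨_, Set.forall_mem_range.2 fun t => neg_le_normSqSlope t.2⟩

lemma normSqDirDeriv_le_normSqSlope (ht : 0 < t) : normSqDirDeriv d x ≤ normSqSlope d x t :=
  ciInf_le bddBelow_range_normSqSlope ⟨t, ht⟩

lemma le_normSqDirDeriv {r : ℝ} (h : ∀ t, 0 < t → r ≤ normSqSlope d x t) :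
    r ≤ normSqDirDeriv d x :=
  le_ciInf fun t => h t t.2

lemma normSqDirDeriv_smul (hk : 0 < k) : normSqDirDeriv d (k • x) = k * normSqDirDeriv d x := by
  apply le_antisymm
  · rw [← div_le_iff₀' hk]
    refine le_normSqDirDeriv fun t ht => ?_
    rw [div_le_iff₀' hk]
    have := normSqDirDeriv_le_normSqSlope (d := d) (x := k • x) (div_pos ht hk)
    rwa [normSqSlope_smul hk (div_pos ht hk), mul_div_cancel₀ t hk.ne'] at this
  · refine le_normSqDirDeriv fun t ht => ?_
    rw [normSqSlope_smul hk ht]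
    exact mul_le_mul_of_nonneg_left (normSqDirDeriv_le_normSqSlope (mul_pos hk ht)) hk.le

lemma normSqDirDeriv_add : normSqDirDeriv d (x + y) ≤ normSqDirDeriv d x + normSqDirDeriv d y := by
  rw [← sub_le_iff_le_add']
  refine le_normSqDirDeriv fun t ht => ?_
  rw [sub_le_comm]
  refine le_normSqDirDeriv fun s hs => ?_
  have hm : 0 < min s t := lt_min hs ht
  have h := (normSqDirDeriv_le_normSqSlope (d := d) (x := x + y) (half_pos hm)).trans
    (normSqSlope_add (half_pos hm))
  rw [mul_div_cancel₀ _ two_ne_zero] at h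
  linarith [normSqSlope_mono (d := d) (x := x) hm (min_le_left s t),
    normSqSlope_mono (d := d) (x := y) hm (min_le_right s t)]

lemma normSqDirDeriv_le : normSqDirDeriv d x ≤ 2 * ‖d‖ * ‖x‖ :=
  le_of_eventually_le_add_mul (c := ‖x‖ ^ 2) <| eventually_nhdsWithin_of_forall fun _ ht =>
    (normSqDirDeriv_le_normSqSlope ht).trans (normSqSlope_le ht)

lemma normSqDirDeriv_neg_self : normSqDirDeriv d (-d) ≤ -(2 * ‖d‖ ^ 2) := by
  refine le_of_eventually_le_add_mul (c := ‖d‖ ^ 2) <| eventually_nhdsWithin_of_forall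
    fun t (ht : 0 < t) => (normSqDirDeriv_le_normSqSlope ht).trans_eq ?_
  have : d + t • -d = (1 - t) • d := by module
  rw [normSqSlope, this, norm_smul, mul_pow, Real.norm_eq_abs, sq_abs]
  field_simp
  ring

lemma exists_extension_le_normSqDirDeriv {A : Submodule ℝ E} {φ : StrongDual ℝ E} {δ : ℝ}
    (hδ : 0 ≤ δ) (h : ∀ a ∈ A, φ a ≤ normSqDirDeriv d a + δ * ‖a‖) :
    ∃ j : StrongDual ℝ E, (∀ a ∈ A, j a = φ a) ∧ ‖j‖ ≤ 2 * ‖d‖ + δ ∧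
      2 * ‖d‖ ^ 2 - δ * ‖d‖ ≤ j d := by
  obtain ⟨g, hgA, hgN⟩ := exists_extension_of_le_sublinear ⟨A, φ.toLinearMap.domRestrict A⟩
    (fun x => normSqDirDeriv d x + δ * ‖x‖)
    (fun k hk x => by
      rw [normSqDirDeriv_smul hk, norm_smul, Real.norm_of_nonneg hk.le]; ring)
    (fun x y => by
      nlinarith [normSqDirDeriv_add (d := d) (x := x) (y := y), norm_add_le x y])
    (fun a => h a a.2)
  have hg : ∀ x, g x ≤ (2 * ‖d‖ + δ) * ‖x‖ := fun x => by
    nlinarith [hgN x, normSqDirDeriv_le (d := d) (x := x)]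
  have hC : 0 ≤ 2 * ‖d‖ + δ := by positivity
  refine ⟨g.mkContinuous _ fun x => abs_le.2 ⟨?_, hg x⟩, fun a ha => hgA ⟨a, ha⟩,
    LinearMap.mkContinuous_norm_le g hC _, ?_⟩
  · have := hg (-x)
    rw [map_neg, norm_neg] at this
    linarith
  · have := hgN (-d)
    simp only [map_neg, norm_neg] at this
    simp only [LinearMap.mkContinuous_apply]
    linarith [normSqDirDeriv_neg_self (d := d)]

end NormSqDirDeriv

lemma Submodule.exists_strongDual_eq_zero_ne_zero {B : Type*} [NormedAddCommGroup B]
    [NormedSpace ℝ B] {A : Submodule ℝ B} (hclosed : IsClosed (A : Set B)) {x : B}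
    (hx : x ∉ A) : ∃ f : StrongDual ℝ B, (∀ a ∈ A, f a = 0) ∧ f x ≠ 0 := by
  obtain ⟨f, u, hfA, hfx⟩ := geometric_hahn_banach_closed_point A.convex hclosed hx
  have hu : 0 < u := by simpa using hfA 0 A.zero_mem
  -- `f` is bounded above on the subspace `A`, hence vanishes there.
  refine ⟨f, fun a ha => by_contra fun hfa => ?_, fun h => by linarith [h ▸ hfx]⟩
  have := hfA (((u + 1) / f a) • a) (A.smul_mem _ ha)
  rw [map_smul, smul_eq_mul, div_mul_cancel₀ _ hfa] at this
  linarith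

section SymmetricForm

variable {B : Type*} [NormedAddCommGroup B] [NormedSpace ℝ B] {L : B →L[ℝ] StrongDual ℝ B}

lemma apply_add_smul_self (hsym : ∀ b c : B, L c b = L b c) (x y : B) (t : ℝ) :
    L (x + t • y) (x + t • y) = L x x + 2 * t * L x y + t ^ 2 * L y y := by
  simp only [map_add, map_smul, add_apply, smul_apply, smul_eq_mul, hsym x y]
  ring

lemma apply_sub_self (hsym : ∀ b c : B, L c b = L b c) (x y : B) :
    L (x - y) (x - y) = L x x - 2 * L x y + L y y := by
  simpa [sub_eq_add_neg, neg_one_smul] using apply_add_smul_self hsym x y (-1)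

/-- The preimage under `L` of the annihilator `A⁰`. -/
def lOrthogonal (L : B →L[ℝ] StrongDual ℝ B) (A : Submodule ℝ B) : Submodule ℝ B where
  carrier := {b | ∀ a ∈ A, L b a = 0}
  add_mem' hx hy a ha := by simp [hx a ha, hy a ha]
  zero_mem' := by simp
  smul_mem' k x hx a ha := by simp [hx a ha]

lemma mem_lOrthogonal {A : Submodule ℝ B} {b : B} : b ∈ lOrthogonal L A ↔ ∀ a ∈ A, L b a = 0 :=
  Iff.rfl

lemma isClosed_lOrthogonal (A : Submodule ℝ B) : IsClosed (lOrthogonal L A : Set B) := by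
  have : (lOrthogonal L A : Set B) = ⋂ a ∈ A, {b | L.flip a b = 0} := by
    ext; simp [mem_lOrthogonal]
  rw [this]
  exact isClosed_biInter fun a _ => isClosed_eq (L.flip a).continuous continuous_const

lemma lOrthogonal_lOrthogonal (hsym : ∀ b c : B, L c b = L b c) (hsurj : Function.Surjective L)
    {A : Submodule ℝ B} (hclosed : IsClosed (A : Set B)) :
    lOrthogonal L (lOrthogonal L A) = A := by
  refine le_antisymm (fun x hx => by_contra fun hxA => ?_)
    fun a ha y hy => (hsym a y).symm.trans (hy a ha)
  obtain ⟨f, hfA, hfx⟩ := Submodule.exists_strongDual_eq_zero_ne_zero hclosed hxA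
  obtain ⟨y, rfl⟩ := hsurj f
  exact hfx ((hsym y x).symm.trans (hx y hfA))

end SymmetricForm

section Core

variable {B : Type*} [NormedAddCommGroup B] [NormedSpace ℝ B] [CompleteSpace B]
  {L : B →L[ℝ] StrongDual ℝ B} {A : Submodule ℝ B} {c : B} {δ : ℝ}

lemma exists_mem_neg_two_mul_le_normSqDirDeriv (hsym : ∀ b c : B, L c b = L b c)
    (hclosed : IsClosed (A : Set B)) (hc : ∀ a ∈ A, 0 ≤ L (c - a) (c - a)) (hδ : 0 < δ) :
    ∃ b ∈ A, ∀ a ∈ A, -(2 * L (c - b) a) ≤ normSqDirDeriv (c - b) a + δ * ‖a‖ := by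
  have : CompleteSpace A := hclosed.completeSpace_coe
  have hG : Continuous fun a : A => L (c - a) (c - a) + ‖c - a‖ ^ 2 := by fun_prop
  obtain ⟨b, hb⟩ := exists_forall_le_add_mul_dist hG
    ⟨0, Set.forall_mem_range.2 fun a => by positivity [hc a a.2]⟩ hδ
  refine ⟨b, b.2, fun a ha => sub_le_iff_le_add.1 <| le_normSqDirDeriv fun s hs => ?_⟩
  set d := c - (b : B)
  -- Test the Ekeland inequality at `b - t • a` for `t ∈ (0, s)`, and let `t → 0⁺`.
  refine le_of_eventually_le_add_mul (c := L a a) <|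
    Filter.mem_of_superset (Ioo_mem_nhdsGT hs) fun t ⟨ht, hts⟩ => ?_
  have hcomp := hb ⟨b - t • a, A.sub_mem b.2 (A.smul_mem t ha)⟩
  have hdist : dist (⟨b - t • a, A.sub_mem b.2 (A.smul_mem t ha)⟩ : A) b = t * ‖a‖ := by
    rw [Subtype.dist_eq, dist_eq_norm, sub_sub_cancel_left, norm_neg, norm_smul,
      Real.norm_of_nonneg ht.le]
  have hsub : c - (b - t • a : B) = d + t • a := by simp only [d]; abel
  simp only [hdist, hsub, apply_add_smul_self hsym] at hcomp
  have hslope : -(2 * L d a) - δ * ‖a‖ - t * L a a ≤ normSqSlope d a t := by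
    rw [normSqSlope, le_div_iff₀ ht]
    nlinarith
  rw [Set.mem_ofPred_eq]
  linarith [normSqSlope_mono (d := d) (x := a) ht hts.le]

lemma exists_mem_norm_sub_le (hnorm : ∀ b, ‖b‖ ≤ ‖L b‖) (hsym : ∀ b c : B, L c b = L b c)
    (hsurj : Function.Surjective L) (hclosed : IsClosed (A : Set B))
    (hneg : ∀ e ∈ lOrthogonal L A, L e e ≤ 0) (hc : ∀ a ∈ A, 0 ≤ L (c - a) (c - a))
    (hδ : 0 < δ) : ∃ b ∈ A, ‖c - b‖ ≤ 3 * δ := by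
  obtain ⟨b, hbA, hb⟩ := exists_mem_neg_two_mul_le_normSqDirDeriv hsym hclosed hc hδ
  set d := c - b
  obtain ⟨j, hjA, hj_norm, hj_d⟩ := exists_extension_le_normSqDirDeriv (φ := -(2 : ℝ) • L d)
    hδ.le fun a ha => by simpa using hb a ha
  obtain ⟨e, rfl⟩ := hsurj j
  have hperp : e + (2 : ℝ) • d ∈ lOrthogonal L A := fun a ha => by
    simp [hjA a ha]
  have hq := hneg _ hperp
  rw [apply_add_smul_self hsym] at hq
  have hee : -((2 * ‖d‖ + δ) ^ 2) ≤ L e e := by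
    have h1 := abs_le.1 (((L e).le_opNorm e).trans_eq' (Real.norm_eq_abs _).symm)
    have h2 := (hnorm e).trans hj_norm
    nlinarith [norm_nonneg e, norm_nonneg (L e)]
  have hdd : 0 ≤ L d d := hc b hbA
  refine ⟨b, hbA, ?_⟩
  nlinarith [norm_nonneg d]

theorem mem_of_forall_nonneg_apply_sub_self (hnorm : ∀ b, ‖b‖ ≤ ‖L b‖)
    (hsym : ∀ b c : B, L c b = L b c) (hsurj : Function.Surjective L)
    (hclosed : IsClosed (A : Set B)) (hneg : ∀ e ∈ lOrthogonal L A, L e e ≤ 0)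
    (hc : ∀ a ∈ A, 0 ≤ L (c - a) (c - a)) : c ∈ A := by
  rw [← SetLike.mem_coe, ← hclosed.closure_eq, Metric.mem_closure_iff]
  intro ε hε
  obtain ⟨b, hbA, hb⟩ := exists_mem_norm_sub_le hnorm hsym hsurj hclosed hneg hc (δ := ε / 4)
    (by positivity)
  exact ⟨b, hbA, by rw [dist_eq_norm]; linarith⟩

end Core

lemma norm_le_norm_apply_of_comp_eq_inclusionInDoubleDual {B : Type*} [NormedAddCommGroup B]
    [NormedSpace ℝ B] {L : B →L[ℝ] StrongDual ℝ B}
    {Lt : StrongDual ℝ B →L[ℝ] StrongDual ℝ (StrongDual ℝ B)}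
    (hLt : @Norm.norm _ (@ContinuousLinearMap.hasOpNorm ℝ ℝ (StrongDual ℝ B)
      (StrongDual ℝ (StrongDual ℝ B)) _ _ _ _ _ _ (RingHom.id ℝ)) Lt ≤ 1)
    (hdual : ∀ b : B, Lt (L b) = inclusionInDoubleDual ℝ B b) (b : B) : ‖b‖ ≤ ‖L b‖ := by
  have hle := @ContinuousLinearMap.le_opNorm ℝ ℝ (StrongDual ℝ B)
    (StrongDual ℝ (StrongDual ℝ B)) _ _ _ _ _ _ (RingHom.id ℝ) _ Lt (L b)
  have hb : ‖inclusionInDoubleDual ℝ B b‖ = ‖b‖ := (inclusionInDoubleDualLi ℝ).norm_map b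
  rw [hdual, hb] at hle
  exact hle.trans (mul_le_of_le_one_left (norm_nonneg _) hLt)

section SNL

variable {B : Type*} [NormedAddCommGroup B] [NormedSpace ℝ B] {L : B →L[ℝ] StrongDual ℝ B}
  {A : Submodule ℝ B}

lemma qL_nonneg_iff {b : B} : 0 ≤ qL L b ↔ 0 ≤ L b b := by
  simp only [qL]; constructor <;> intro h <;> linarith

lemma qL_nonpos_iff {b : B} : qL L b ≤ 0 ↔ L b b ≤ 0 := by
  simp only [qL]; constructor <;> intro h <;> linarith

lemma qL_apply_of_comp_eq_inclusionInDoubleDual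
    {Lt : StrongDual ℝ B →L[ℝ] StrongDual ℝ (StrongDual ℝ B)}
    (hdual : ∀ b : B, Lt (L b) = inclusionInDoubleDual ℝ B b) (b : B) :
    qL Lt (L b) = qL L b := by
  simp only [qL, hdual, dual_def]

lemma lOrthogonal_neg : lOrthogonal (-L) A = lOrthogonal L A := by
  ext; simp [mem_lOrthogonal]

lemma lPositive_of_forall_qL_nonneg (hpos : ∀ a ∈ A, 0 ≤ qL L a) : LPositive L A :=
  ⟨⟨0, A.zero_mem⟩, fun _ hb _ hc => hpos _ (A.sub_mem hb hc)⟩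

lemma apply_self_nonpos_of_maxLPositive (hsym : ∀ b c : B, L c b = L b c)
    (hmax : MaxLPositive L A) {e : B} (he : e ∈ lOrthogonal L A) : L e e ≤ 0 := by
  have hpos : ∀ a ∈ A, 0 ≤ L a a := fun a ha => by
    simpa [qL_nonneg_iff] using hmax.1.2 a ha 0 A.zero_mem
  by_contra! hee
  -- Otherwise `insert e A` is a strictly larger `L`-positive set.
  have hins : LPositive L (insert e (A : Set B)) := by
    refine ⟨⟨e, Set.mem_insert _ _⟩, ?_⟩
    rintro v (rfl | hv) w (rfl | hw) <;> rw [qL_nonneg_iff, apply_sub_self hsym]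
    · linarith
    · linarith [he w hw, hpos w hw]
    · linarith [(hsym v _).symm.trans (he v hv), hpos v hv]
    · rw [← apply_sub_self hsym, ← qL_nonneg_iff]
      exact hmax.1.2 v hv w hw
  have heA : e ∈ (A : Set B) := by
    rw [← hmax.2 _ hins (Set.subset_insert _ _)]
    exact Set.mem_insert e _
  linarith [he e heA]

lemma maxLPositive_of_apply_self_nonpos [CompleteSpace B] (hnorm : ∀ b, ‖b‖ ≤ ‖L b‖)
    (hsym : ∀ b c : B, L c b = L b c) (hsurj : Function.Surjective L)
    (hclosed : IsClosed (A : Set B)) (hpos : ∀ a ∈ A, 0 ≤ qL L a)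
    (hneg : ∀ e ∈ lOrthogonal L A, L e e ≤ 0) : MaxLPositive L A :=
  ⟨lPositive_of_forall_qL_nonneg hpos, fun _ hA' hAA' => subset_antisymm
    (fun x hx => mem_of_forall_nonneg_apply_sub_self hnorm hsym hsurj hclosed hneg
      fun a ha => qL_nonneg_iff.1 (hA'.2 x hx a (hAA' ha))) hAA'⟩

variable {Lt : StrongDual ℝ B →L[ℝ] StrongDual ℝ (StrongDual ℝ B)}

lemma lNegative_annihilator_iff (hdual : ∀ b : B, Lt (L b) = inclusionInDoubleDual ℝ B b)
    (hsurj : Function.Surjective L) :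
    LNegative Lt {b' : StrongDual ℝ B | ∀ a ∈ A, b' a = 0} ↔
      ∀ e ∈ lOrthogonal L A, L e e ≤ 0 := by
  refine ⟨fun h e he => ?_, fun h => ⟨⟨0, fun _ _ => rfl⟩, ?_⟩⟩
  · simpa [qL_apply_of_comp_eq_inclusionInDoubleDual hdual, qL_nonpos_iff] using
      h.2 (L e) he 0 fun _ _ => rfl
  · intro p hp q hq
    obtain ⟨x, rfl⟩ := hsurj p
    obtain ⟨y, rfl⟩ := hsurj q
    rw [← map_sub, qL_apply_of_comp_eq_inclusionInDoubleDual hdual, qL_nonpos_iff]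
    exact h _ ((lOrthogonal L A).sub_mem hp hq)

lemma maxLNegative_annihilator [CompleteSpace B] (hnorm : ∀ b, ‖b‖ ≤ ‖L b‖)
    (hsym : ∀ b c : B, L c b = L b c)
    (hdual : ∀ b : B, Lt (L b) = inclusionInDoubleDual ℝ B b) (hsurj : Function.Surjective L)
    (hclosed : IsClosed (A : Set B)) (hpos : ∀ a ∈ A, 0 ≤ qL L a)
    (hneg : ∀ e ∈ lOrthogonal L A, L e e ≤ 0) :
    MaxLNegative Lt {b' : StrongDual ℝ B | ∀ a ∈ A, b' a = 0} := by
  refine ⟨(lNegative_annihilator_iff hdual hsurj).2 hneg, fun S hS hsub => subset_antisymm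
    (fun s hs => ?_) hsub⟩
  obtain ⟨x, rfl⟩ := hsurj s
  -- The roles of `A` and its `L`-orthogonal are exchanged by passing from `L` to `-L`.
  refine mem_of_forall_nonneg_apply_sub_self (L := -L) (A := lOrthogonal L A)
    (by simpa using hnorm) (by simp [hsym]) (fun p => (hsurj (-p)).imp fun _ hx => by simp [hx])
    (isClosed_lOrthogonal A) (fun e he => ?_) (fun y hy => ?_)
  · rw [lOrthogonal_neg, lOrthogonal_lOrthogonal hsym hsurj hclosed] at he
    simpa [qL_nonneg_iff] using hpos e he
  · have := hS.2 (L x) hs (L y) (hsub hy)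
    rw [← map_sub, qL_apply_of_comp_eq_inclusionInDoubleDual hdual, qL_nonpos_iff] at this
    simpa using this

end SNL

theorem stmt18_general {B : Type*} [NormedAddCommGroup B] [NormedSpace ℝ B] [CompleteSpace B]
    (L : B →L[ℝ] StrongDual ℝ B)
    (hsym : ∀ b c : B, L c b = L b c)
    (Lt : StrongDual ℝ B →L[ℝ] StrongDual ℝ (StrongDual ℝ B)) (hLt : @Norm.norm _ (@ContinuousLinearMap.hasOpNorm ℝ ℝ (StrongDual ℝ B) (StrongDual ℝ (StrongDual ℝ B)) _ _ _ _ _ _ (RingHom.id ℝ)) Lt ≤ 1)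
    (hdual : ∀ b : B, Lt (L b) = inclusionInDoubleDual ℝ B b)
    (hsurj : Function.Surjective L)
    (A : Subspace ℝ B) (hclosed : IsClosed (A : Set B))
    (hpos : ∀ a ∈ A, 0 ≤ qL L a) :
    (MaxLPositive L (A : Set B) ↔
      LNegative Lt {b' : StrongDual ℝ B | ∀ a ∈ A, b' a = 0}) ∧
    (MaxLPositive L (A : Set B) ↔
      MaxLNegative Lt {b' : StrongDual ℝ B | ∀ a ∈ A, b' a = 0}) := by
  have hnorm := norm_le_norm_apply_of_comp_eq_inclusionInDoubleDual hLt hdual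
  have hneg_iff := lNegative_annihilator_iff (A := A) hdual hsurj
  have hmax_iff : MaxLPositive L (A : Set B) ↔
      LNegative Lt {b' : StrongDual ℝ B | ∀ a ∈ A, b' a = 0} :=
    ⟨fun h => hneg_iff.2 fun _ => apply_self_nonpos_of_maxLPositive hsym h,
      fun h => maxLPositive_of_apply_self_nonpos hnorm hsym hsurj hclosed hpos (hneg_iff.1 h)⟩
  exact ⟨hmax_iff, hmax_iff.trans ⟨fun h =>
    maxLNegative_annihilator hnorm hsym hdual hsurj hclosed hpos (hneg_iff.1 h), And.left⟩⟩

theorem stmt18 {B : Type*} [NormedAddCommGroup B] [NormedSpace ℝ B] [CompleteSpace B]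
    [Nontrivial B]
    (L : B →L[ℝ] StrongDual ℝ B) (hL : ‖L‖ ≤ 1)
    (hsym : ∀ b c : B, L c b = L b c)
    (Lt : StrongDual ℝ B →L[ℝ] StrongDual ℝ (StrongDual ℝ B)) (hLt : @Norm.norm _ (@ContinuousLinearMap.hasOpNorm ℝ ℝ (StrongDual ℝ B) (StrongDual ℝ (StrongDual ℝ B)) _ _ _ _ _ _ (RingHom.id ℝ)) Lt ≤ 1)
    (hsymt : ∀ p q : StrongDual ℝ B, Lt q p = Lt p q)
    (hdual : ∀ b : B, Lt (L b) = inclusionInDoubleDual ℝ B b)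
    (hsurj : Function.Surjective L)
    (A : Subspace ℝ B) (hclosed : IsClosed (A : Set B))
    (hpos : ∀ a ∈ A, 0 ≤ qL L a) :
    (MaxLPositive L (A : Set B) ↔
      LNegative Lt {b' : StrongDual ℝ B | ∀ a ∈ A, b' a = 0}) ∧
    (MaxLPositive L (A : Set B) ↔
      MaxLNegative Lt {b' : StrongDual ℝ B | ∀ a ∈ A, b' a = 0}) :=
  stmt18_general L hsym Lt hLt hdual hsurj A hclosed hpos
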